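/- arXiv:1009.2457 — 5 statements merged into one kernel-verified Lean document; each statement's English description precedes it below -/
import Mathlib

section
/- Let r₁, r₂ > 0 and s₂ ∈ ℝ be constants, and let a, ã, b, b̃, c, c̃, d : ℝ → ℝ be differentiable functions of the variable s₁ satisfying, for every s₁ ∈ ℝ: (i) r₁·c'(s₁) = 2·r₂·d(s₁)² + 2·s₁; (ii) c̃'(s₁) = 2·d(s₁)²; (iii) d'(s₁) = 2·c(s₁)·d(s₁) − 2·b̃(s₁) and r₁·d'(s₁) = r₂·(2·c̃(s₁)·d(s₁) − 2·b(s₁)); (iv) −(r₁·b + r₂·b̃)'(s₁) = r₂·(4·a(s₁)·d(s₁) + 4·ã(s₁)·d(s₁) + 2·b(s₁)·c̃(s₁) + 2·b̃(s₁)·c(s₁)) + 2·s₂·d(s₁); (v) r₁·(2·a(s₁) + c(s₁)²) = r₂·d(s₁)² + s₁; (vi) r₂·(2·ã(s₁) + c̃(s₁)²) = r₁·d(s₁)² + s₂; (vii) r₂·b(s₁) − r₁·b̃(s₁) = (r₂·c̃(s₁) − r₁·c(s₁))·d(s₁). Then d is twice differentiable and satisfies, for all s₁ ∈ ℝ, the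 differential equation d''(s₁) = 8·(r₂/r₁)·((r₁·s₂ + r₂·s₁)/(r₁² + r₂²))·d(s₁) + 8·(r₂/r₁)·d(s₁)³. -/
/-!
Writing `D = r₁ c̃ + r₂ c` and `B = r₁ b + r₂ b̃`, the two expressions (iii) for `d'` combine
(`r₁ ·` the second plus `r₂² ·` the first) into `(r₁² + r₂²) d' = 2 r₂ (D d - B)`. The right-hand
side is differentiable, hence so is `d'`, and differentiating it gives `d''` in terms of `D'`,
`B'` and `d'`. Substituting (i), (ii), (iv) for these and eliminating `a, ã` by (v), (vi) and the
remaining `b, b̃` by (iii) leaves a polynomial in `d` alone: Painlevé II.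
-/

theorem mul_deriv_eq_of_lax_relations {R : Type*} [CommRing R] (r₁ r₂ b bt c ct d d' : R)
    (h3 : d' = 2 * c * d - 2 * bt) (h3' : r₁ * d' = r₂ * (2 * ct * d - 2 * b)) :
    (r₁ ^ 2 + r₂ ^ 2) * d' = 2 * r₂ * ((r₁ * ct + r₂ * c) * d - (r₁ * b + r₂ * bt)) := by
  linear_combination r₁ * h3' + r₂ ^ 2 * h3

theorem mul_second_deriv_eq_of_lax_relations {R : Type*} [CommRing R]
    (r₁ r₂ s₁ s₂ a at' b bt c ct d c' ct' d' B' : R)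
    (h1 : r₁ * c' = 2 * r₂ * d ^ 2 + 2 * s₁) (h2 : ct' = 2 * d ^ 2)
    (h3 : d' = 2 * c * d - 2 * bt) (h3' : r₁ * d' = r₂ * (2 * ct * d - 2 * b))
    (h4 : -B' = r₂ * (4 * a * d + 4 * at' * d + 2 * b * ct + 2 * bt * c) + 2 * s₂ * d)
    (h5 : r₁ * (2 * a + c ^ 2) = r₂ * d ^ 2 + s₁)
    (h6 : r₂ * (2 * at' + ct ^ 2) = r₁ * d ^ 2 + s₂) :
    r₁ * ((r₁ * ct' + r₂ * c') * d + (r₁ * ct + r₂ * c) * d' - B') =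
      4 * (r₁ * s₂ + r₂ * s₁) * d + 4 * (r₁ ^ 2 + r₂ ^ 2) * d ^ 3 := by
  linear_combination r₁ ^ 2 * d * h2 + r₂ * d * h1 + r₁ * h4 + r₁ * ct * h3' +
    r₁ * r₂ * c * h3 + 2 * r₂ * d * h5 + 2 * r₁ * d * h6

theorem d_satisfies_scaled_painleveII_general
    (r₁ r₂ s₂ : ℝ) (hr₁ : 0 < r₁)
    (a at' b bt c ct d : ℝ → ℝ)
    (hb : Differentiable ℝ b) (hbt : Differentiable ℝ bt)
    (hc : Differentiable ℝ c) (hct : Differentiable ℝ ct)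
    (hd : Differentiable ℝ d)
    (h1 : ∀ s₁ : ℝ, r₁ * deriv c s₁ = 2 * r₂ * (d s₁) ^ 2 + 2 * s₁)
    (h2 : ∀ s₁ : ℝ, deriv ct s₁ = 2 * (d s₁) ^ 2)
    (h3 : ∀ s₁ : ℝ, deriv d s₁ = 2 * c s₁ * d s₁ - 2 * bt s₁)
    (h3' : ∀ s₁ : ℝ, r₁ * deriv d s₁ = r₂ * (2 * ct s₁ * d s₁ - 2 * b s₁))
    (h4 : ∀ s₁ : ℝ, -(deriv (fun s => r₁ * b s + r₂ * bt s) s₁) =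
        r₂ * (4 * a s₁ * d s₁ + 4 * at' s₁ * d s₁ +
          2 * b s₁ * ct s₁ + 2 * bt s₁ * c s₁) + 2 * s₂ * d s₁)
    (h5 : ∀ s₁ : ℝ, r₁ * (2 * a s₁ + (c s₁) ^ 2) = r₂ * (d s₁) ^ 2 + s₁)
    (h6 : ∀ s₁ : ℝ, r₂ * (2 * at' s₁ + (ct s₁) ^ 2) = r₁ * (d s₁) ^ 2 + s₂) :
    Differentiable ℝ (deriv d) ∧
      ∀ s₁ : ℝ, deriv (deriv d) s₁ =
        8 * (r₂ / r₁) * ((r₁ * s₂ + r₂ * s₁) / (r₁ ^ 2 + r₂ ^ 2)) * d s₁ +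
          8 * (r₂ / r₁) * (d s₁) ^ 3 := by
  have hR : r₁ ^ 2 + r₂ ^ 2 ≠ 0 := by positivity
  set B : ℝ → ℝ := fun s => r₁ * b s + r₂ * bt s
  set g : ℝ → ℝ := fun s => (r₁ * ct s + r₂ * c s) * d s - B s
  have hB : Differentiable ℝ B := (hb.const_mul r₁).add (hbt.const_mul r₂)
  have hg' (s : ℝ) : HasDerivAt g
      ((r₁ * deriv ct s + r₂ * deriv c s) * d s + (r₁ * ct s + r₂ * c s) * deriv d s -
        deriv B s) s :=
    ((((hct s).hasDerivAt.const_mul r₁).add ((hc s).hasDerivAt.const_mul r₂)).mul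
      (hd s).hasDerivAt).sub (hB s).hasDerivAt
  have hdg : deriv d = fun s => 2 * r₂ / (r₁ ^ 2 + r₂ ^ 2) * g s := funext fun s => by
    rw [div_mul_eq_mul_div, eq_div_iff hR, mul_comm]
    exact mul_deriv_eq_of_lax_relations r₁ r₂ _ _ _ _ _ _ (h3 s) (h3' s)
  refine ⟨hdg ▸ fun s => (hg' s).differentiableAt.const_mul _, fun s => ?_⟩
  rw [hdg, deriv_const_mul _ (hg' s).differentiableAt, (hg' s).deriv]
  have key := mul_second_deriv_eq_of_lax_relations r₁ r₂ s s₂ _ _ _ _ _ _ _ _ _ _ _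
    (h1 s) (h2 s) (h3 s) (h3' s) (h4 s) (h5 s) (h6 s)
  field_simp
  linear_combination 2 * r₂ * key

/-- From the Lax-pair compatibility relations for the entries of
the residue matrix `M₁`, the entry `d` satisfies a scaled and shifted
Painlevé II equation. -/
theorem d_satisfies_scaled_painleveII
    (r₁ r₂ s₂ : ℝ) (hr₁ : 0 < r₁) (hr₂ : 0 < r₂)
    (a at' b bt c ct d : ℝ → ℝ)
    (ha : Differentiable ℝ a) (hat : Differentiable ℝ at')
    (hb : Differentiable ℝ b) (hbt : Differentiable ℝ bt)
    (hc : Differentiable ℝ c) (hct : Differentiable ℝ ct)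
    (hd : Differentiable ℝ d)
    (h1 : ∀ s₁ : ℝ, r₁ * deriv c s₁ = 2 * r₂ * (d s₁) ^ 2 + 2 * s₁)
    (h2 : ∀ s₁ : ℝ, deriv ct s₁ = 2 * (d s₁) ^ 2)
    (h3 : ∀ s₁ : ℝ, deriv d s₁ = 2 * c s₁ * d s₁ - 2 * bt s₁)
    (h3' : ∀ s₁ : ℝ, r₁ * deriv d s₁ = r₂ * (2 * ct s₁ * d s₁ - 2 * b s₁))
    (h4 : ∀ s₁ : ℝ, -(deriv (fun s => r₁ * b s + r₂ * bt s) s₁) =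
        r₂ * (4 * a s₁ * d s₁ + 4 * at' s₁ * d s₁ +
          2 * b s₁ * ct s₁ + 2 * bt s₁ * c s₁) + 2 * s₂ * d s₁)
    (h5 : ∀ s₁ : ℝ, r₁ * (2 * a s₁ + (c s₁) ^ 2) = r₂ * (d s₁) ^ 2 + s₁)
    (h6 : ∀ s₁ : ℝ, r₂ * (2 * at' s₁ + (ct s₁) ^ 2) = r₁ * (d s₁) ^ 2 + s₂)
    (h7 : ∀ s₁ : ℝ, r₂ * b s₁ - r₁ * bt s₁ = (r₂ * ct s₁ - r₁ * c s₁) * d s₁) :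
    Differentiable ℝ (deriv d) ∧
      ∀ s₁ : ℝ, deriv (deriv d) s₁ =
        8 * (r₂ / r₁) * ((r₁ * s₂ + r₂ * s₁) / (r₁ ^ 2 + r₂ ^ 2)) * d s₁ +
          8 * (r₂ / r₁) * (d s₁) ^ 3 :=
  d_satisfies_scaled_painleveII_general r₁ r₂ s₂ hr₁ a at' b bt c ct d hb hbt hc hct hd h1 h2 h3 h3'
    h4 h5 h6
end

section
/- Let 0 < t < 1, p₁ > 0 and α₁ < β₁ be real numbers with β₁ − α₁ = 4·√(p₁·t·(1−t)). Set Δ = α₁² − α₁·β₁ + β₁², β = (α₁ + β₁ + 2·√Δ)/3 and δ₁ = (α₁ + β₁ − √Δ)/3. Then ∫₀^β (x − δ₁)/(2π·t·(1−t)) · √((β − x)/x) dx = p₁; that is, the signed measure μ₁ on [0, β] with density dμ₁/dx = ((x − δ₁)/(2π·t·(1−t)))·√((β − x)/x) has total mass p₁. -/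
/-!
The substitution `x = β (1 + sin θ) / 2` turns `(x - δ) √((β - x) / x)` into a trigonometric
polynomial, which yields the elementary primitive `sqrtRatioPrimitive β δ`; evaluating it at the
endpoints gives `∫₀^β (x - δ) √((β - x) / x) dx = π β (β - 4δ) / 8`. For the edges `β`, `δ₁`
built from `α₁`, `β₁`, the quantity `β (β - 4δ₁)` equals `(β₁ - α₁)² = 16 p₁ t (1 - t)`.
-/

open Real Set intervalIntegral MeasureTheory

theorem intervalIntegrable_sqrt_sub_div_self {β : ℝ} (hβ : 0 ≤ β) :
    IntervalIntegrable (fun x => √((β - x) / x)) volume 0 β := by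
  have hmeas : Measurable fun x : ℝ => √((β - x) / x) :=
    ((measurable_const.sub measurable_id).div measurable_id).sqrt
  refine ((intervalIntegrable_rpow' (r := -(1 / 2)) (by norm_num)).const_mul √β).mono_fun'
    hmeas.aestronglyMeasurable ?_
  filter_upwards [ae_restrict_mem measurableSet_uIoc] with x hx
  rw [uIoc_of_le hβ] at hx
  rw [norm_of_nonneg (sqrt_nonneg _), rpow_neg hx.1.le, ← sqrt_eq_rpow, ← div_eq_mul_inv,
    ← sqrt_div' _ hx.1.le]
  exact sqrt_le_sqrt (div_le_div_of_nonneg_right (sub_le_self _ hx.1.le) hx.1.le)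

noncomputable def sqrtRatioPrimitive (β δ x : ℝ) : ℝ :=
  ((x - β / 2) / 2 - δ) * √(x * (β - x)) + (β ^ 2 / 8 - δ * β / 2) * arcsin ((2 * x - β) / β)

theorem continuous_sqrtRatioPrimitive (β δ : ℝ) : Continuous (sqrtRatioPrimitive β δ) := by
  unfold sqrtRatioPrimitive
  fun_prop

theorem sqrtRatioPrimitive_sub {β : ℝ} (hβ : β ≠ 0) (δ : ℝ) :
    sqrtRatioPrimitive β δ β - sqrtRatioPrimitive β δ 0 = π / 8 * (β ^ 2 - 4 * δ * β) := by
  simp only [sqrtRatioPrimitive, sub_self, mul_zero, zero_mul, sqrt_zero, zero_sub,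
    two_mul, add_sub_cancel_right, neg_div, div_self hβ, arcsin_neg, arcsin_one]
  ring

section Deriv

variable {β x : ℝ}

theorem hasDerivAt_sqrt_mul_sub (hx : x ∈ Ioo 0 β) :
    HasDerivAt (fun y => √(y * (β - y))) ((β - 2 * x) / (2 * √(x * (β - x)))) x := by
  have hpos : x * (β - x) ≠ 0 := (mul_pos hx.1 (sub_pos.2 hx.2)).ne'
  refine (((hasDerivAt_id' x).fun_mul ((hasDerivAt_id' x).const_sub β)).sqrt hpos).congr_deriv ?_
  ring

theorem hasDerivAt_arcsin_two_mul_sub_div (hx : x ∈ Ioo 0 β) :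
    HasDerivAt (fun y => arcsin ((2 * y - β) / β)) (1 / √(x * (β - x))) x := by
  have hβ : 0 < β := hx.1.trans hx.2
  have hmem : (2 * x - β) / β ∈ Ioo (-1) 1 := by
    constructor
    · rw [lt_div_iff₀ hβ]; linarith [hx.1]
    · rw [div_lt_one hβ]; linarith [hx.2]
  have hsqrt : √(1 - ((2 * x - β) / β) ^ 2) = 2 / β * √(x * (β - x)) := by
    rw [← sqrt_sq (by positivity : 0 ≤ 2 / β), ← sqrt_mul (sq_nonneg _)]
    congr 1
    field_simp
    ring
  refine ((hasDerivAt_arcsin hmem.1.ne' hmem.2.ne).comp x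
    ((((hasDerivAt_id' x).const_mul 2).sub_const β).div_const β)).congr_deriv ?_
  rw [hsqrt]
  field_simp

theorem hasDerivAt_sqrtRatioPrimitive (δ : ℝ) (hx : x ∈ Ioo 0 β) :
    HasDerivAt (sqrtRatioPrimitive β δ) ((x - δ) * √((β - x) / x)) x := by
  have hβx : 0 < β - x := sub_pos.2 hx.2
  set s := √(x * (β - x)) with hs
  have hs0 : 0 < s := sqrt_pos.2 (mul_pos hx.1 hβx)
  have hs2 : s ^ 2 = x * (β - x) := sq_sqrt (mul_pos hx.1 hβx).le
  have hratio : √((β - x) / x) = (β - x) / s := by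
    rw [← sqrt_sq (div_pos hβx hs0).le, div_pow, hs2]
    congr 1
    field_simp
  refine ((((((hasDerivAt_id' x).sub_const (β / 2)).div_const 2).sub_const δ).fun_mul
    (hasDerivAt_sqrt_mul_sub hx)).fun_add
    ((hasDerivAt_arcsin_two_mul_sub_div hx).const_mul (β ^ 2 / 8 - δ * β / 2))).congr_deriv ?_
  rw [hratio, ← hs]
  field_simp
  linear_combination 32 * hs2

end Deriv

theorem integral_sub_mul_sqrt_sub_div_self {β : ℝ} (hβ : 0 < β) (δ : ℝ) :
    ∫ x in 0..β, (x - δ) * √((β - x) / x) = π / 8 * (β ^ 2 - 4 * δ * β) := by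
  rw [integral_eq_sub_of_hasDerivAt_of_le hβ.le
    (continuous_sqrtRatioPrimitive β δ).continuousOn
    (fun x hx => hasDerivAt_sqrtRatioPrimitive δ hx)
    ((intervalIntegrable_sqrt_sub_div_self hβ.le).continuousOn_mul (by fun_prop)),
    sqrtRatioPrimitive_sub hβ.ne']

section Endpoints

variable {a b r : ℝ}

theorem add_add_two_mul_pos (hab : a < b) (hr0 : 0 ≤ r) (hr : r ^ 2 = a ^ 2 - a * b + b ^ 2) :
    0 < a + b + 2 * r := by
  nlinarith [sq_pos_of_pos (sub_pos.2 hab)]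

theorem sq_sub_four_mul_eq_sq_sub (hr : r ^ 2 = a ^ 2 - a * b + b ^ 2) :
    ((a + b + 2 * r) / 3) ^ 2 - 4 * ((a + b - r) / 3) * ((a + b + 2 * r) / 3) = (b - a) ^ 2 := by
  linear_combination (4 / 3) * hr

end Endpoints

/-- The signed measure `μ₁` on `[0, β]` with density
`((x − δ₁)/(2π t(1−t)))·√((β − x)/x)` has total mass `p₁`. -/
theorem mu1_total_mass (t p₁ α₁ β₁ : ℝ) (ht0 : 0 < t) (ht1 : t < 1)
    (hp₁ : 0 < p₁) (hαβ : α₁ < β₁)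
    (hsep : β₁ - α₁ = 4 * Real.sqrt (p₁ * t * (1 - t)))
    (Δ β δ₁ : ℝ)
    (hΔ : Δ = α₁ ^ 2 - α₁ * β₁ + β₁ ^ 2)
    (hβ : β = (α₁ + β₁ + 2 * Real.sqrt Δ) / 3)
    (hδ₁ : δ₁ = (α₁ + β₁ - Real.sqrt Δ) / 3) :
    ∫ x in (0:ℝ)..β,
        (x - δ₁) / (2 * Real.pi * t * (1 - t)) * Real.sqrt ((β - x) / x) = p₁ := by
  have hΔ0 : 0 ≤ Δ := by
    rw [hΔ]
    nlinarith [sq_nonneg (α₁ - β₁)]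
  have hr : √Δ ^ 2 = α₁ ^ 2 - α₁ * β₁ + β₁ ^ 2 := by rw [sq_sqrt hΔ0, hΔ]
  have hβpos : 0 < β := by
    rw [hβ]
    exact div_pos (add_add_two_mul_pos hαβ (sqrt_nonneg Δ) hr) three_pos
  have ht1' : 0 < 1 - t := sub_pos.2 ht1
  have hmass : β ^ 2 - 4 * δ₁ * β = 16 * (p₁ * t * (1 - t)) := by
    rw [hβ, hδ₁, sq_sub_four_mul_eq_sq_sub hr, hsep, mul_pow, sq_sqrt (by positivity)]
    norm_num
  simp_rw [div_mul_eq_mul_div, intervalIntegral.integral_div,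
    integral_sub_mul_sqrt_sub_div_self hβpos, hmass]
  field_simp
  ring
end

section
/- Let α₁ < β₁ be real numbers, Δ = α₁² − α₁·β₁ + β₁², and δ₁ = (α₁ + β₁ − √Δ)/3. Then: (a) if α₁ > 0, then α₁/3 < δ₁ < α₁/2 (in particular δ₁ > 0); (b) if α₁ < 0 and β₁ > 0, then 2α₁/3 < δ₁ < α₁/2 (in particular δ₁ < 0). -/
/-- The zero `δ₁ = (α₁ + β₁ − √Δ)/3` of the density of `μ₁`
has the same sign as `α₁`, with the stated quantitative bounds. -/
theorem delta1_sign_bounds (α₁ β₁ : ℝ) (h : α₁ < β₁) :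
    (0 < α₁ →
      α₁ / 3 < (α₁ + β₁ - Real.sqrt (α₁ ^ 2 - α₁ * β₁ + β₁ ^ 2)) / 3 ∧
      (α₁ + β₁ - Real.sqrt (α₁ ^ 2 - α₁ * β₁ + β₁ ^ 2)) / 3 < α₁ / 2) ∧
    (α₁ < 0 → 0 < β₁ →
      2 * α₁ / 3 < (α₁ + β₁ - Real.sqrt (α₁ ^ 2 - α₁ * β₁ + β₁ ^ 2)) / 3 ∧
      (α₁ + β₁ - Real.sqrt (α₁ ^ 2 - α₁ * β₁ + β₁ ^ 2)) / 3 < α₁ / 2) := by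
  set s := Real.sqrt (α₁ ^ 2 - α₁ * β₁ + β₁ ^ 2) with hsdef
  have hΔ : (0:ℝ) ≤ α₁ ^ 2 - α₁ * β₁ + β₁ ^ 2 := by nlinarith [sq_nonneg (α₁ - β₁), sq_nonneg (α₁ + β₁)]
  have hs0 : 0 ≤ s := Real.sqrt_nonneg _
  have hs2 : s ^ 2 = α₁ ^ 2 - α₁ * β₁ + β₁ ^ 2 := Real.sq_sqrt hΔ
  constructor
  · intro hα
    constructor
    · nlinarith [sq_nonneg (s - β₁), sq_nonneg (s + β₁)]
    · nlinarith [sq_nonneg (s - (β₁ - α₁ / 2)), sq_nonneg (s + (β₁ - α₁ / 2))]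
  · intro hα hβ
    constructor
    · nlinarith [sq_nonneg (s - (β₁ - α₁)), sq_nonneg (s + (β₁ - α₁))]
    · nlinarith [sq_nonneg (s - (β₁ - α₁ / 2)), sq_nonneg (s + (β₁ - α₁ / 2))]
end

section
/- Let 0 < t < 1, β > 0 and δ₁ < β be real numbers, and set p₁ = β·(β − 4·δ₁)/(16·t·(1−t)). Define L : [β, ∞) → ℝ by L(x) = ((2x − β − 4δ₁)/(8·t·(1−t)))·√(x² − β·x) − p₁·log((x − β/2 + √(x² − β·x))/(β/2)). Then L(β) = 0, L is differentiable on (β, ∞) with L'(x) = ((x − δ₁)/(2·t·(1−t)))·√((x − β)/x) > 0 for all x > β, and consequently L(x) > 0 for all x > β. -/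
/-!
The logarithmic term of `L` is `p₁ · arcosh ((2x - β)/β)`, with derivative `p₁ / √(x² - βx)`;
for exactly this value of `p₁` it combines with the derivative of the algebraic term into
`ξ₁(x) = (x - δ₁)/(2t(1-t)) · √((x - β)/x)`, which is positive for `x > β > δ₁`.
As `L(β) = 0` and `L` is continuous on `[β, ∞)`, `L` is strictly increasing there, hence positive
on `(β, ∞)`.
-/

open Real Set

-- With `c = t(1 - t)` and `δ = δ₁`: `xi` is `ξ₁`, `totalMass` is `p₁` and `reLambda … (totalMass …)` is `L`.
noncomputable def xi (β δ c x : ℝ) : ℝ :=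
  (x - δ) / (2 * c) * √((x - β) / x)

noncomputable def totalMass (β δ c : ℝ) : ℝ :=
  β * (β - 4 * δ) / (16 * c)

noncomputable def reLambda (β δ c p x : ℝ) : ℝ :=
  (2 * x - β - 4 * δ) / (8 * c) * √(x ^ 2 - β * x) -
    p * log ((x - β / 2 + √(x ^ 2 - β * x)) / (β / 2))

lemma reLambda_self {β : ℝ} (hβ : β ≠ 0) (δ c p : ℝ) : reLambda β δ c p β = 0 := by
  have hβ2 : β - β / 2 = β / 2 := by ring
  simp [reLambda, sq, hβ2, div_self (div_ne_zero hβ two_ne_zero)]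

lemma sq_sub_mul_pos {β x : ℝ} (hβ : 0 ≤ β) (hx : β < x) : 0 < x ^ 2 - β * x := by
  nlinarith

lemma hasDerivAt_sqrt_sq_sub_mul {β x : ℝ} (hx : x ^ 2 - β * x ≠ 0) :
    HasDerivAt (fun y => √(y ^ 2 - β * y)) ((2 * x - β) / (2 * √(x ^ 2 - β * x))) x := by
  have hpoly : HasDerivAt (fun y : ℝ => y ^ 2 - β * y) (2 * x - β) x := by
    simpa using ((hasDerivAt_id' x).fun_pow 2).fun_sub ((hasDerivAt_id' x).const_mul β)
  exact hpoly.sqrt hx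

-- The logarithm is an `arcosh`: `log ((y - β/2 + √(y² - βy)) / (β/2)) = arcosh ((2y - β) / β)`.
lemma hasDerivAt_log_arcosh {β x : ℝ} (hβ : 0 < β) (hx : β < x) :
    HasDerivAt (fun y => log ((y - β / 2 + √(y ^ 2 - β * y)) / (β / 2)))
      (1 / √(x ^ 2 - β * x)) x := by
  have hq := sq_sub_mul_pos hβ.le hx
  have hs : 0 < √(x ^ 2 - β * x) := sqrt_pos.mpr hq
  have hu : 0 < x - β / 2 + √(x ^ 2 - β * x) := by linarith
  have hderiv := ((((hasDerivAt_id' x).sub_const (β / 2)).fun_add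
    (hasDerivAt_sqrt_sq_sub_mul hq.ne')).div_const (β / 2)).log
    (div_pos hu (half_pos hβ)).ne'
  convert hderiv using 1
  generalize √(x ^ 2 - β * x) = s at hs hu
  have hu' : 2 * x - β + s * 2 ≠ 0 := by linarith
  field_simp
  ring

lemma sqrt_sub_div_self {β x : ℝ} (hβ : 0 ≤ β) (hx : β < x) :
    √((x - β) / x) = (x - β) / √(x ^ 2 - β * x) := by
  have hx0 : 0 < x := hβ.trans_lt hx
  rw [eq_div_iff (sqrt_pos.mpr (sq_sub_mul_pos hβ hx)).ne',
    ← sqrt_mul (div_nonneg (sub_nonneg.mpr hx.le) hx0.le)]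
  have hsq : (x - β) / x * (x ^ 2 - β * x) = (x - β) ^ 2 := by field_simp
  rw [hsq, sqrt_sq (sub_nonneg.mpr hx.le)]

lemma hasDerivAt_reLambda {β c : ℝ} (δ : ℝ) (hc : c ≠ 0) (hβ : 0 < β) {x : ℝ} (hx : β < x) :
    HasDerivAt (reLambda β δ c (totalMass β δ c)) (xi β δ c x) x := by
  have hq := sq_sub_mul_pos hβ.le hx
  have hs : 0 < √(x ^ 2 - β * x) := sqrt_pos.mpr hq
  have hs2 : √(x ^ 2 - β * x) ^ 2 = x ^ 2 - β * x := sq_sqrt hq.le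
  have hlin : HasDerivAt (fun y : ℝ => (2 * y - β - 4 * δ) / (8 * c)) (2 / (8 * c)) x := by
    simpa using ((((hasDerivAt_id' x).const_mul 2).sub_const β).sub_const (4 * δ)).div_const (8 * c)
  have hderiv := (hlin.fun_mul (hasDerivAt_sqrt_sq_sub_mul hq.ne')).fun_sub
    ((hasDerivAt_log_arcosh hβ hx).const_mul (totalMass β δ c))
  refine hderiv.congr_deriv ?_
  rw [xi, totalMass, sqrt_sub_div_self hβ.le hx]
  generalize √(x ^ 2 - β * x) = s at hs hs2
  field_simp
  linear_combination 64 * hs2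

lemma continuousOn_reLambda {β : ℝ} (hβ : 0 < β) (δ c p : ℝ) :
    ContinuousOn (reLambda β δ c p) (Ici β) := by
  refine (Continuous.continuousOn (by fun_prop)).sub
    (continuousOn_const.mul (ContinuousOn.log (by fun_prop) fun y (hy : β ≤ y) => ?_))
  have hs := sqrt_nonneg (y ^ 2 - β * y)
  exact (div_pos (by linarith) (half_pos hβ)).ne'

lemma xi_pos {β δ c x : ℝ} (hc : 0 < c) (hδ : δ < x) (hx0 : 0 < x) (hx : β < x) :
    0 < xi β δ c x :=
  mul_pos (div_pos (sub_pos.mpr hδ) (by positivity))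
    (sqrt_pos.mpr (div_pos (sub_pos.mpr hx) hx0))

lemma reLambda_pos {β δ c : ℝ} (hc : 0 < c) (hβ : 0 < β) (hδ : δ < β) {x : ℝ} (hx : β < x) :
    0 < reLambda β δ c (totalMass β δ c) x := by
  have hmono : StrictMonoOn (reLambda β δ c (totalMass β δ c)) (Ici β) := by
    refine strictMonoOn_of_deriv_pos (convex_Ici β) (continuousOn_reLambda hβ _ _ _) fun y hy => ?_
    rw [interior_Ici] at hy
    rw [(hasDerivAt_reLambda δ hc.ne' hβ hy).deriv]
    exact xi_pos hc (hδ.trans hy) (hβ.trans hy) hy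
  simpa [reLambda_self hβ.ne'] using hmono self_mem_Ici hx.le hx

/-- The real part `L` of the boundary values of `λ₁` on
`[β, ∞)` vanishes at `β`, has positive derivative
`((x − δ₁)/(2t(1−t)))·√((x − β)/x)` on `(β, ∞)`, and hence is positive there. -/
theorem lambda1_positive_on_right (t β δ₁ p₁ : ℝ) (ht0 : 0 < t) (ht1 : t < 1)
    (hβ : 0 < β) (hδ₁ : δ₁ < β)
    (hp₁ : p₁ = β * (β - 4 * δ₁) / (16 * t * (1 - t)))
    (L : ℝ → ℝ)
    (hL : L = fun x => (2 * x - β - 4 * δ₁) / (8 * t * (1 - t)) *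
        Real.sqrt (x ^ 2 - β * x) -
        p₁ * Real.log ((x - β / 2 + Real.sqrt (x ^ 2 - β * x)) / (β / 2))) :
    L β = 0 ∧
    (∀ x : ℝ, β < x →
      HasDerivAt L ((x - δ₁) / (2 * t * (1 - t)) * Real.sqrt ((x - β) / x)) x ∧
      0 < (x - δ₁) / (2 * t * (1 - t)) * Real.sqrt ((x - β) / x)) ∧
    (∀ x : ℝ, β < x → 0 < L x) := by
  have hc : 0 < t * (1 - t) := mul_pos ht0 (sub_pos.mpr ht1)
  obtain rfl : L = reLambda β δ₁ (t * (1 - t)) (totalMass β δ₁ (t * (1 - t))) := by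
    subst hL hp₁
    simp only [totalMass, mul_assoc]
    rfl
  simp only [mul_assoc 2 t]
  exact ⟨reLambda_self hβ.ne' _ _ _,
    fun x hx => ⟨hasDerivAt_reLambda δ₁ hc.ne' hβ hx, xi_pos hc (hδ₁.trans hx) (hβ.trans hx) hx⟩,
    fun x hx => reLambda_pos hc hβ hδ₁ hx⟩
end

section
/- Let β and β′ be real numbers and let z ∈ ℂ with z ≠ β′. Then, with √ denoting the principal branch of the complex square root, Re(√(z − β)/√(z − β′)) ≥ 0. Consequently, |√(z − β) − √(z − β′)| ≤ |β − β′|/√|z − β′|. -/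
/-!
A principal square root `√w` lies in the closed right half-plane, and `Im √w ≥ 0` exactly when
`Im w ≥ 0`. Since `z - β` and `z - β'` have the same imaginary part, their square roots `a`, `b`
lie in the same closed quarter-plane, so `Re (a * conj b) ≥ 0`. This gives `Re (a / b) ≥ 0` and
`‖b‖ ≤ ‖a + b‖`, and then `‖a - b‖ * ‖b‖ ≤ ‖a - b‖ * ‖a + b‖ = ‖a ^ 2 - b ^ 2‖ = |β - β'|`.
-/

open ComplexConjugate

namespace Complex

lemma cpow_inv_two_re_nonneg (x : ℂ) : 0 ≤ (x ^ (2⁻¹ : ℂ)).re := by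
  rw [cpow_inv_two_re]
  exact Real.sqrt_nonneg _

lemma cpow_inv_two_im_nonneg {x : ℂ} (hx : 0 ≤ x.im) : 0 ≤ (x ^ (2⁻¹ : ℂ)).im := by
  rw [cpow_inv_two_im_eq_sqrt hx]
  exact Real.sqrt_nonneg _

lemma cpow_inv_two_im_nonpos {x : ℂ} (hx : x.im < 0) : (x ^ (2⁻¹ : ℂ)).im ≤ 0 := by
  rw [cpow_inv_two_im_eq_neg_sqrt hx]
  exact neg_nonpos.2 (Real.sqrt_nonneg _)

lemma norm_cpow_inv_two (x : ℂ) : ‖x ^ (2⁻¹ : ℂ)‖ = √‖x‖ := by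
  conv_rhs => rw [← cpow_ofNat_inv_pow x 2]
  rw [norm_pow, Real.sqrt_sq (norm_nonneg _)]

lemma re_cpow_inv_two_mul_conj_nonneg {x y : ℂ} (h : 0 ≤ x.im ↔ 0 ≤ y.im) :
    0 ≤ (x ^ (2⁻¹ : ℂ) * conj (y ^ (2⁻¹ : ℂ))).re := by
  have hre := mul_nonneg (cpow_inv_two_re_nonneg x) (cpow_inv_two_re_nonneg y)
  rw [mul_re, conj_re, conj_im, mul_neg, sub_neg_eq_add]
  rcases le_or_gt 0 y.im with hy | hy
  · nlinarith [cpow_inv_two_im_nonneg (h.2 hy), cpow_inv_two_im_nonneg hy]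
  · have hx : x.im < 0 := lt_of_not_ge fun hx ↦ hy.not_ge (h.1 hx)
    nlinarith [cpow_inv_two_im_nonpos hx, cpow_inv_two_im_nonpos hy]

lemma re_div_nonneg_of_re_mul_conj_nonneg {a b : ℂ} (h : 0 ≤ (a * conj b).re) :
    0 ≤ (a / b).re := by
  rw [div_re, ← add_div]
  refine div_nonneg ?_ (normSq_nonneg b)
  simpa [mul_re] using h

lemma norm_le_norm_add_of_re_mul_conj_nonneg {a b : ℂ} (h : 0 ≤ (a * conj b).re) :
    ‖b‖ ≤ ‖a + b‖ := by
  rw [← sq_le_sq₀ (norm_nonneg _) (norm_nonneg _), ← normSq_eq_norm_sq, ← normSq_eq_norm_sq,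
    normSq_add]
  nlinarith [normSq_nonneg a]

lemma norm_sub_mul_norm_le_of_re_mul_conj_nonneg {a b : ℂ} (h : 0 ≤ (a * conj b).re) :
    ‖a - b‖ * ‖b‖ ≤ ‖a ^ 2 - b ^ 2‖ := by
  rw [sq_sub_sq, norm_mul, mul_comm ‖a + b‖]
  exact mul_le_mul_of_nonneg_left (norm_le_norm_add_of_re_mul_conj_nonneg h) (norm_nonneg _)

lemma norm_cpow_inv_two_sub_mul_le {x y : ℂ} (h : 0 ≤ x.im ↔ 0 ≤ y.im) :
    ‖x ^ (2⁻¹ : ℂ) - y ^ (2⁻¹ : ℂ)‖ * √‖y‖ ≤ ‖x - y‖ := by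
  simpa [norm_cpow_inv_two] using
    norm_sub_mul_norm_le_of_re_mul_conj_nonneg (re_cpow_inv_two_mul_conj_nonneg h)

end Complex

open Complex

/-- For real shifts `β, β′` and `z ≠ β′`, the ratio of principal
square roots `√(z − β)/√(z − β′)` has non-negative real part, and consequently
`|√(z − β) − √(z − β′)| ≤ |β − β′|/√|z − β′|`. -/
theorem sqrt_ratio_re_nonneg (β β' : ℝ) (z : ℂ) (hz : z ≠ (β' : ℂ)) :
    0 ≤ ((z - (β : ℂ)) ^ ((1:ℂ)/2) / (z - (β' : ℂ)) ^ ((1:ℂ)/2)).re ∧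
    ‖(z - (β : ℂ)) ^ ((1:ℂ)/2) - (z - (β' : ℂ)) ^ ((1:ℂ)/2)‖ ≤
      |β - β'| / Real.sqrt ‖z - (β' : ℂ)‖ := by
  have him : 0 ≤ (z - β).im ↔ 0 ≤ (z - β').im := by simp
  simp only [one_div]
  refine ⟨re_div_nonneg_of_re_mul_conj_nonneg (re_cpow_inv_two_mul_conj_nonneg him), ?_⟩
  rw [le_div_iff₀ (Real.sqrt_pos.2 (norm_pos_iff.2 (sub_ne_zero.2 hz)))]
  calc _ ≤ ‖(z - β) - (z - β')‖ := norm_cpow_inv_two_sub_mul_le him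
    _ = |β - β'| := by
      rw [sub_sub_sub_cancel_left, ← ofReal_sub, norm_real, Real.norm_eq_abs, abs_sub_comm]
end
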